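/- Let C ⊆ F_q^I be a linear code and r ≥ 1 an integer. If there exists a partition (J, J̄) of I with min{|J|, |J̄|} ≥ r and dim(C|_J) + dim(C|_{J̄}) − dim(C) = r, then there exist codes C₁ (on index set J ∪ I_Δ) and C₂ (on index set J̄ ∪ I_Δ), where I_Δ is a fresh index set of size (q^r−1)/(q−1) disjoint from I, such that C = C₁ ⊕_r C₂. -/
import Mathlib


open Module

/-- The submodule of functions in `α → F` vanishing on `s`. -/
def vanishOn (F : Type*) [Field F] {α : Type*} (s : Set α) : Submodule F (α → F) where
  carrier := {x | ∀ a ∈ s, x a = 0}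
  add_mem' := by
    intro x y hx hy a ha
    show x a + y a = 0
    rw [hx a ha, hy a ha, add_zero]
  zero_mem' := fun a _ => rfl
  smul_mem' := by
    intro c x hx a ha
    show c • x a = 0
    rw [hx a ha, smul_zero]

variable (F : Type*) [Field F] (J K Jb : Type*)

/-- The `⋆` operation: indices of the first code are `J ⊕ K`, of the second `K ⊕ Jb`,
where `K` plays the role of the common index set `I₁ ∩ I₂`.  On `J` the result agrees with
`x`, on `Jb` with `y`, and on the common part `K` it is `x − y`. -/
noncomputable def starMap :
    ((J ⊕ K → F) × (K ⊕ Jb → F)) →ₗ[F] (J ⊕ K ⊕ Jb → F) where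
  toFun p := Sum.elim (fun j => p.1 (Sum.inl j))
    (Sum.elim (fun k => p.1 (Sum.inr k) - p.2 (Sum.inl k)) (fun j => p.2 (Sum.inr j)))
  map_add' p q := by
    funext i
    rcases i with j | k | j <;> simp <;> ring
  map_smul' c p := by
    funext i
    rcases i with j | k | j <;> simp <;> ring

variable {F J K Jb}

/-- The code `C₁ ⋆ C₂ = {x ⋆ y : x ∈ C₁, y ∈ C₂}`. -/
noncomputable def starCode (C₁ : Submodule F (J ⊕ K → F)) (C₂ : Submodule F (K ⊕ Jb → F)) :
    Submodule F (J ⊕ K ⊕ Jb → F) :=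
  (C₁.prod C₂).map (starMap F J K Jb)

/-- The projection `C₁^{(p)} = C₁|_{I₁ ∩ I₂}` of the first code onto the common part `K`. -/
noncomputable def projK₁ (C₁ : Submodule F (J ⊕ K → F)) : Submodule F (K → F) :=
  C₁.map (LinearMap.funLeft F F (Sum.inr : K → J ⊕ K))

/-- The projection `C₂^{(p)} = C₂|_{I₁ ∩ I₂}` of the second code onto the common part `K`. -/
noncomputable def projK₂ (C₂ : Submodule F (K ⊕ Jb → F)) : Submodule F (K → F) :=
  C₂.map (LinearMap.funLeft F F (Sum.inl : K → K ⊕ Jb))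

/-- The cross-section `C₁^{(s)} = (C₁)_{I₁ ∩ I₂}` on the common part `K`. -/
noncomputable def crossK₁ (C₁ : Submodule F (J ⊕ K → F)) : Submodule F (K → F) :=
  (C₁ ⊓ vanishOn F (Set.range (Sum.inl : J → J ⊕ K))).map
    (LinearMap.funLeft F F (Sum.inr : K → J ⊕ K))

/-- The cross-section `C₂^{(s)} = (C₂)_{I₁ ∩ I₂}` on the common part `K`. -/
noncomputable def crossK₂ (C₂ : Submodule F (K ⊕ Jb → F)) : Submodule F (K → F) :=
  (C₂ ⊓ vanishOn F (Set.range (Sum.inr : Jb → K ⊕ Jb))).map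
    (LinearMap.funLeft F F (Sum.inl : K → K ⊕ Jb))

/-- `S(C₁, C₂)`: the cross-section of `C₁ ⋆ C₂` on the symmetric difference
`I₁ Δ I₂ = J ⊕ Jb`. -/
noncomputable def sCode (C₁ : Submodule F (J ⊕ K → F)) (C₂ : Submodule F (K ⊕ Jb → F)) :
    Submodule F (J ⊕ Jb → F) :=
  (starCode C₁ C₂ ⊓ vanishOn F (Set.range (fun k : K => (Sum.inr (Sum.inl k) : J ⊕ K ⊕ Jb)))).map
    (LinearMap.funLeft F F (Sum.elim Sum.inl (Sum.inr ∘ Sum.inr) : J ⊕ Jb → J ⊕ K ⊕ Jb))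

/-- The projection `C|_J` of a code `C ⊆ F^I` onto the coordinates in `J ⊆ I`. -/
noncomputable def projCode {I : Type*} (C : Submodule F (I → F)) (J : Set I) :
    Submodule F (↥J → F) :=
  C.map (LinearMap.funLeft F F (Subtype.val : ↥J → I))


section MonicAux

open scoped Classical

variable {F : Type*} [Field F] {r : ℕ}

/-- A "monic" vector: some coordinate equals `1` and all earlier coordinates vanish. -/
def MonicVec (v : Fin r → F) : Prop := ∃ j, v j = 1 ∧ ∀ i < j, v i = 0

lemma MonicVec.ne_zero {v : Fin r → F} (h : MonicVec v) : v ≠ 0 := by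
  obtain ⟨j, hj, -⟩ := h
  intro h0
  rw [h0] at hj
  simpa using hj.symm

lemma monicVec_single (i : Fin r) : MonicVec (Pi.single i (1 : F)) :=
  ⟨i, Pi.single_eq_same i 1, fun i' hi' => Pi.single_eq_of_ne (ne_of_lt hi') 1⟩

lemma MonicVec.pair_linearIndependent {v w : Fin r → F} (hv : MonicVec v) (hw : MonicVec w)
    (hvw : v ≠ w) : LinearIndependent F ![v, w] := by
  obtain ⟨jv, hv1, hv0⟩ := hv
  obtain ⟨jw, hw1, hw0⟩ := hw
  rw [LinearIndependent.pair_iff]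
  intro s t hst
  rcases lt_trichotomy jv jw with h | h | h
  · have hs : s = 0 := by
      have := congrFun hst jv
      simpa [hv1, hw0 jv h] using this
    subst hs
    have := congrFun hst jw
    simp only [zero_smul, zero_add, Pi.add_apply, Pi.smul_apply, smul_eq_mul,
      Pi.zero_apply, hw1, mul_one] at this
    exact ⟨rfl, this⟩
  · subst h
    have h1 : s + t = 0 := by
      have := congrFun hst jv
      simpa [hv1, hw1] using this
    have ht : t = -s := eq_neg_of_add_eq_zero_right h1
    have h2 : s • v - s • w = 0 := by
      have h3 := hst
      rw [ht, neg_smul, ← sub_eq_add_neg] at h3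
      exact h3
    rcases smul_eq_zero.mp (show s • (v - w) = 0 by rwa [smul_sub]) with hs | h4
    · exact ⟨hs, by rw [ht, hs, neg_zero]⟩
    · exact absurd (sub_eq_zero.mp h4) hvw
  · have ht : t = 0 := by
      have := congrFun hst jw
      simpa [hw1, hv0 jw h] using this
    subst ht
    have := congrFun hst jv
    simp only [zero_smul, add_zero, Pi.add_apply, Pi.smul_apply, smul_eq_mul,
      Pi.zero_apply, hv1, mul_one] at this
    exact ⟨this, rfl⟩

end MonicAux

section LeadAux

open scoped Classical

variable {F : Type*} [Field F] {r : ℕ}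

/-- The first index where a nonzero vector is nonzero. -/
noncomputable def leadIdx (v : Fin r → F) (hv : v ≠ 0) : Fin r :=
  (Finset.univ.filter fun i => v i ≠ 0).min' (by
    obtain ⟨i, hi⟩ := Function.ne_iff.mp hv
    exact ⟨i, Finset.mem_filter.mpr ⟨Finset.mem_univ _, by simpa using hi⟩⟩)

lemma leadIdx_ne_zero (v : Fin r → F) (hv : v ≠ 0) : v (leadIdx v hv) ≠ 0 := by
  have h : leadIdx v hv ∈ Finset.univ.filter fun i => v i ≠ 0 := Finset.min'_mem _ _
  exact (Finset.mem_filter.mp h).2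

lemma leadIdx_eq_zero_of_lt {v : Fin r → F} {hv : v ≠ 0} {i : Fin r}
    (h : i < leadIdx v hv) : v i = 0 := by
  by_contra hne
  exact absurd (Finset.min'_le _ i (Finset.mem_filter.mpr ⟨Finset.mem_univ _, hne⟩))
    (not_le.mpr h)

lemma leadIdx_smul_monic (c : F) {w : Fin r → F} (hv : c • w ≠ 0)
    {j : Fin r} (hj1 : w j = 1) (hj0 : ∀ i < j, w i = 0) : leadIdx (c • w) hv = j := by
  have hc : c ≠ 0 := by rintro rfl; simp at hv
  apply le_antisymm
  · exact Finset.min'_le _ j (Finset.mem_filter.mpr ⟨Finset.mem_univ _, by simp [hj1, hc]⟩)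
  · by_contra hlt
    push_neg at hlt
    exact leadIdx_ne_zero _ hv (by simp [hj0 _ hlt])

/-- Decomposition of nonzero vectors: leading coefficient times a monic vector. -/
noncomputable def nonzeroEquivMonic (F : Type*) [Field F] (r : ℕ) :
    {v : Fin r → F // v ≠ 0} ≃ Fˣ × {v : Fin r → F // MonicVec v} where
  toFun v := ⟨Units.mk0 (v.1 (leadIdx v.1 v.2)) (leadIdx_ne_zero v.1 v.2),
    ⟨(v.1 (leadIdx v.1 v.2))⁻¹ • v.1,
      ⟨leadIdx v.1 v.2,
        by simp [inv_mul_cancel₀ (leadIdx_ne_zero v.1 v.2)],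
        fun i hi => by simp [leadIdx_eq_zero_of_lt hi]⟩⟩⟩
  invFun p := ⟨(p.1 : F) • p.2.1, smul_ne_zero p.1.ne_zero p.2.2.ne_zero⟩
  left_inv v := by
    apply Subtype.ext
    show (v.1 (leadIdx v.1 v.2)) • ((v.1 (leadIdx v.1 v.2))⁻¹ • v.1) = v.1
    rw [smul_smul, mul_inv_cancel₀ (leadIdx_ne_zero v.1 v.2), one_smul]
  right_inv p := by
    obtain ⟨c, w⟩ := p
    obtain ⟨j, hj1, hj0⟩ := w.2
    have hne : (c : F) • w.1 ≠ 0 := smul_ne_zero c.ne_zero w.2.ne_zero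
    have hlead : leadIdx ((c : F) • w.1) hne = j := leadIdx_smul_monic _ hne hj1 hj0
    have hval : ((c : F) • w.1) (leadIdx ((c : F) • w.1) hne) = (c : F) := by
      rw [hlead]; simp [hj1]
    refine Prod.ext (Units.ext ?_) (Subtype.ext ?_)
    · exact hval
    · show (((c : F) • w.1) (leadIdx ((c : F) • w.1) hne))⁻¹ • ((c : F) • w.1) = w.1
      rw [hval, smul_smul, inv_mul_cancel₀ c.ne_zero, one_smul]

lemma card_monicVec (F : Type*) [Field F] [Fintype F] (r : ℕ) :
    Nat.card {v : Fin r → F // MonicVec v}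
      = (Fintype.card F ^ r - 1) / (Fintype.card F - 1) := by
  have h2 : 1 < Fintype.card F := Fintype.one_lt_card
  have hnz : Nat.card {v : Fin r → F // v ≠ 0} = Fintype.card F ^ r - 1 := by
    rw [Nat.card_eq_fintype_card, Fintype.card_subtype_compl (fun v : Fin r → F => v = 0)]
    rw [Fintype.card_subtype_eq (0 : Fin r → F), Fintype.card_fun, Fintype.card_fin]
  have hcongr := Nat.card_congr (nonzeroEquivMonic F r)
  rw [Nat.card_prod, hnz, Nat.card_eq_fintype_card, Fintype.card_units] at hcongr
  exact (Nat.div_eq_of_eq_mul_left (by omega) (by rw [hcongr, mul_comm])).symm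

end LeadAux

section ComboAux

variable {F : Type*} [Field F]

/-- Linear combination map sending coefficients to `∑ i, v i • D i`. -/
noncomputable def comboMap {n : ℕ} {K : Type*} (D : Fin n → K → F) :
    (Fin n → F) →ₗ[F] (K → F) where
  toFun v := ∑ i, v i • D i
  map_add' x y := by simp [add_smul, Finset.sum_add_distrib]
  map_smul' c x := by simp [Finset.smul_sum, mul_smul]

lemma comboMap_single {n : ℕ} {K : Type*} (D : Fin n → K → F) (i : Fin n) :
    comboMap D (Pi.single i 1) = D i := by
  classical
  show ∑ j, (Pi.single i (1 : F) : Fin n → F) j • D j = D i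
  rw [Finset.sum_eq_single i (fun b _ hb => by simp [Pi.single_eq_of_ne hb]) (by simp)]
  simp

lemma comboMap_range {n : ℕ} {K : Type*} (D : Fin n → K → F) :
    LinearMap.range (comboMap D) = Submodule.span F (Set.range D) := by
  apply le_antisymm
  · rintro _ ⟨v, rfl⟩
    show ∑ i, v i • D i ∈ _
    exact Submodule.sum_mem _ fun i _ =>
      Submodule.smul_mem _ _ (Submodule.subset_span ⟨i, rfl⟩)
  · rw [Submodule.span_le]
    rintro _ ⟨i, rfl⟩
    exact ⟨Pi.single i 1, comboMap_single D i⟩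

lemma comboMap_inj {n : ℕ} {K : Type*} {D : Fin n → K → F}
    (hD : LinearIndependent F D) {v : Fin n → F} (h : comboMap D v = 0) : v = 0 := by
  have h2 : ∑ i, v i • D i = 0 := h
  have := Fintype.linearIndependent_iff.mp hD v h2
  funext i
  exact this i

/-- Pairing of two linear maps into function spaces. -/
noncomputable def pairL {M A B : Type*} [AddCommGroup M] [Module F M]
    (f : M →ₗ[F] (A → F)) (g : M →ₗ[F] (B → F)) : M →ₗ[F] (A ⊕ B → F) where
  toFun x := Sum.elim (f x) (g x)
  map_add' x y := by funext i; rcases i with a | b <;> simp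
  map_smul' c x := by funext i; rcases i with a | b <;> simp

end ComboAux

set_option maxHeartbeats 1000000 in
set_option synthInstance.maxHeartbeats 400000 in
lemma exists_psi {F : Type*} [Field F] {I : Type*} [Fintype I]
    (C : Submodule F (I → F)) (J : Set I) (r : ℕ)
    (hdim : finrank F (projCode C J) + finrank F (projCode C Jᶜ) = finrank F C + r) :
    ∃ ψ : ↥C →ₗ[F] (Fin r → F), Function.Surjective ψ ∧
      LinearMap.ker ψ
        = LinearMap.ker (LinearMap.funLeft F F (Subtype.val : ↥J → I) ∘ₗ C.subtype)
          ⊔ LinearMap.ker (LinearMap.funLeft F F (Subtype.val : ↥Jᶜ → I) ∘ₗ C.subtype) := by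
  classical
  set g₁ := LinearMap.funLeft F F (Subtype.val : ↥J → I) ∘ₗ C.subtype with hg₁
  set g₂ := LinearMap.funLeft F F (Subtype.val : ↥Jᶜ → I) ∘ₗ C.subtype with hg₂
  have hrange₁ : LinearMap.range g₁ = projCode C J := by
    rw [hg₁, LinearMap.range_comp, Submodule.range_subtype]; rfl
  have hrange₂ : LinearMap.range g₂ = projCode C Jᶜ := by
    rw [hg₂, LinearMap.range_comp, Submodule.range_subtype]; rfl
  have h₁ := LinearMap.finrank_range_add_finrank_ker g₁
  have h₂ := LinearMap.finrank_range_add_finrank_ker g₂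
  rw [hrange₁] at h₁
  rw [hrange₂] at h₂
  have hdisj : LinearMap.ker g₁ ⊓ LinearMap.ker g₂ = ⊥ := by
    rw [eq_bot_iff]
    rintro x ⟨hx1, hx2⟩
    rw [Submodule.mem_bot]
    apply Subtype.ext
    funext i
    by_cases hi : i ∈ J
    · exact congrFun (LinearMap.mem_ker.mp hx1) ⟨i, hi⟩
    · exact congrFun (LinearMap.mem_ker.mp hx2) ⟨i, hi⟩
  have hsup := Submodule.finrank_sup_add_finrank_inf_eq (LinearMap.ker g₁) (LinearMap.ker g₂)
  rw [hdisj, finrank_bot] at hsup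
  have hq := Submodule.finrank_quotient_add_finrank (LinearMap.ker g₁ ⊔ LinearMap.ker g₂)
  have hquot : finrank F (↥C ⧸ (LinearMap.ker g₁ ⊔ LinearMap.ker g₂)) = r := by
    have t1 : finrank F ↥(projCode C J) + finrank F ↥(LinearMap.ker g₁) = finrank F ↥C := h₁
    have t2 : finrank F ↥(projCode C Jᶜ) + finrank F ↥(LinearMap.ker g₂) = finrank F ↥C := h₂
    have t3 : finrank F ↥(projCode C J) + finrank F ↥(projCode C Jᶜ) = finrank F ↥C + r := hdim
    omega
  let b := Module.finBasisOfFinrankEq F (↥C ⧸ (LinearMap.ker g₁ ⊔ LinearMap.ker g₂)) hquot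
  refine ⟨b.equivFun.toLinearMap ∘ₗ (LinearMap.ker g₁ ⊔ LinearMap.ker g₂).mkQ, ?_, ?_⟩
  · exact b.equivFun.surjective.comp (Submodule.mkQ_surjective _)
  · rw [LinearMap.ker_comp, LinearEquiv.ker, Submodule.comap_bot, Submodule.ker_mkQ]

open scoped Classical in
/-- if a partition `(J, Jᶜ)` of the index set of `C` satisfies
`min{|J|,|Jᶜ|} ≥ r` and `dim C|_J + dim C|_{Jᶜ} − dim C = r` (with `r ≥ 1`), then there
are codes `C₁` on `J ∪ I_Δ` and `C₂` on `Jᶜ ∪ I_Δ`, where `I_Δ` is a fresh index set of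
size `(q^r−1)/(q−1)`, such that `C = C₁ ⊕_r C₂`: both projections onto `I_Δ` equal a
simplex code `Δ_r`, both cross-sections on `I_Δ` vanish, and `S(C₁,C₂)` is the copy of `C`
on `J ⊕ Jᶜ`. -/
theorem rSum_decomposition {I : Type*} [Fintype I] [Fintype F]
    (C : Submodule F (I → F)) (J : Set I) (r : ℕ) (hr : 1 ≤ r)
    (hJ : r ≤ Nat.card ↥J) (hJc : r ≤ Nat.card ↥Jᶜ)
    (hdim : finrank F ↥(projCode C J) + finrank F ↥(projCode C Jᶜ) = finrank F ↥C + r) :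
    ∃ (C₁ : Submodule F (↥J ⊕ Fin ((Fintype.card F ^ r - 1) / (Fintype.card F - 1)) → F))
      (C₂ : Submodule F (Fin ((Fintype.card F ^ r - 1) / (Fintype.card F - 1)) ⊕ ↥Jᶜ → F))
      (D : Fin r → Fin ((Fintype.card F ^ r - 1) / (Fintype.card F - 1)) → F),
      LinearIndependent F D ∧
      (∀ k₁ k₂, k₁ ≠ k₂ → LinearIndependent F ![fun i => D i k₁, fun i => D i k₂]) ∧
      projK₁ C₁ = Submodule.span F (Set.range D) ∧
      projK₂ C₂ = Submodule.span F (Set.range D) ∧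
      crossK₁ C₁ = ⊥ ∧ crossK₂ C₂ = ⊥ ∧
      sCode C₁ C₂ = C.map (LinearMap.funLeft F F ⇑(Equiv.Set.sumCompl J)) := by
  classical
  obtain ⟨ψ, hψs, hψker⟩ := exists_psi C J r hdim
  set g₁ := LinearMap.funLeft F F (Subtype.val : ↥J → I) ∘ₗ C.subtype with hg₁
  set g₂ := LinearMap.funLeft F F (Subtype.val : ↥Jᶜ → I) ∘ₗ C.subtype with hg₂
  have hcard : Nat.card {v : Fin r → F // MonicVec v}
      = (Fintype.card F ^ r - 1) / (Fintype.card F - 1) := card_monicVec F r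
  let e : Fin ((Fintype.card F ^ r - 1) / (Fintype.card F - 1)) ≃
      {v : Fin r → F // MonicVec v} := (Finite.equivFinOfCardEq hcard).symm
  let D : Fin r → Fin ((Fintype.card F ^ r - 1) / (Fintype.card F - 1)) → F :=
    fun i k => (e k).1 i
  have hD : LinearIndependent F D := by
    rw [Fintype.linearIndependent_iff]
    intro g hg i
    set k₀ := e.symm ⟨Pi.single i 1, monicVec_single i⟩ with hk₀
    have hk : ∀ j, D j k₀ = (Pi.single i (1 : F) : Fin r → F) j := fun j => by
      show (e k₀).1 j = _
      rw [hk₀, Equiv.apply_symm_apply]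
    have h2 := congrFun hg k₀
    simp only [Finset.sum_apply, Pi.smul_apply, smul_eq_mul, Pi.zero_apply] at h2
    rw [Finset.sum_congr rfl (fun j _ => by rw [hk j])] at h2
    rwa [Finset.sum_eq_single i (fun b _ hb => by simp [Pi.single_eq_of_ne hb]) (by simp),
      Pi.single_eq_same, mul_one] at h2
  have hmonic : ∀ k, MonicVec (fun i => D i k) := fun k => (e k).2
  have hpair : ∀ k₁ k₂, k₁ ≠ k₂ →
      LinearIndependent F ![fun i => D i k₁, fun i => D i k₂] := by
    intro k₁ k₂ hne
    refine MonicVec.pair_linearIndependent (hmonic k₁) (hmonic k₂) ?_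
    intro hEq
    apply hne
    apply e.injective
    apply Subtype.ext
    funext i
    exact congrFun hEq i
  let σ := comboMap D
  let h₁ : ↥C →ₗ[F] (↥J ⊕ Fin ((Fintype.card F ^ r - 1) / (Fintype.card F - 1)) → F) :=
    pairL g₁ (σ ∘ₗ ψ)
  let h₂ : ↥C →ₗ[F] (Fin ((Fintype.card F ^ r - 1) / (Fintype.card F - 1)) ⊕ ↥Jᶜ → F) :=
    pairL (σ ∘ₗ ψ) g₂
  refine ⟨LinearMap.range h₁, LinearMap.range h₂, D, hD, hpair, ?_, ?_, ?_, ?_, ?_⟩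
  · -- projK₁
    have hcomp : LinearMap.funLeft F F
        (Sum.inr : Fin ((Fintype.card F ^ r - 1) / (Fintype.card F - 1)) → _) ∘ₗ h₁
        = σ ∘ₗ ψ := by
      ext x
      rfl
    show (LinearMap.range h₁).map _ = _
    rw [← LinearMap.range_comp, hcomp, LinearMap.range_comp, LinearMap.range_eq_top.mpr hψs,
      Submodule.map_top, comboMap_range]
  · -- projK₂
    have hcomp : LinearMap.funLeft F F
        (Sum.inl : Fin ((Fintype.card F ^ r - 1) / (Fintype.card F - 1)) → _) ∘ₗ h₂
        = σ ∘ₗ ψ := by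
      ext x
      rfl
    show (LinearMap.range h₂).map _ = _
    rw [← LinearMap.range_comp, hcomp, LinearMap.range_comp, LinearMap.range_eq_top.mpr hψs,
      Submodule.map_top, comboMap_range]
  · -- crossK₁ = ⊥
    rw [eq_bot_iff]
    rintro w hw
    obtain ⟨x, ⟨hxC, hxv⟩, rfl⟩ := Submodule.mem_map.mp hw
    obtain ⟨c, rfl⟩ := hxC
    have hcker : c ∈ LinearMap.ker g₁ := by
      rw [LinearMap.mem_ker]
      funext j
      exact hxv (Sum.inl j) ⟨j, rfl⟩
    have hψ0 : ψ c = 0 := by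
      have hmem : c ∈ LinearMap.ker ψ := by rw [hψker]; exact Submodule.mem_sup_left hcker
      exact LinearMap.mem_ker.mp hmem
    rw [Submodule.mem_bot]
    funext k
    show σ (ψ c) k = 0
    rw [hψ0, map_zero]
    rfl
  · -- crossK₂ = ⊥
    rw [eq_bot_iff]
    rintro w hw
    obtain ⟨x, ⟨hxC, hxv⟩, rfl⟩ := Submodule.mem_map.mp hw
    obtain ⟨c, rfl⟩ := hxC
    have hcker : c ∈ LinearMap.ker g₂ := by
      rw [LinearMap.mem_ker]
      funext j
      exact hxv (Sum.inr j) ⟨j, rfl⟩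
    have hψ0 : ψ c = 0 := by
      have hmem : c ∈ LinearMap.ker ψ := by rw [hψker]; exact Submodule.mem_sup_right hcker
      exact LinearMap.mem_ker.mp hmem
    rw [Submodule.mem_bot]
    funext k
    show σ (ψ c) k = 0
    rw [hψ0, map_zero]
    rfl
  · -- sCode
    ext w
    constructor
    · intro hw
      obtain ⟨z, ⟨hzstar, hzv⟩, rfl⟩ := Submodule.mem_map.mp hw
      obtain ⟨⟨p1, p2⟩, hp, rfl⟩ := Submodule.mem_map.mp hzstar
      obtain ⟨hp1, hp2⟩ := hp
      obtain ⟨x, rfl⟩ := hp1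
      obtain ⟨y', rfl⟩ := hp2
      have hker : ψ (x - y') = 0 := by
        apply comboMap_inj hD
        rw [map_sub, map_sub]
        funext k
        have h1 := hzv (Sum.inr (Sum.inl k)) ⟨k, rfl⟩
        show comboMap D (ψ x) k - comboMap D (ψ y') k = 0
        exact h1
      have hmem : x - y' ∈ LinearMap.ker g₁ ⊔ LinearMap.ker g₂ := by
        rw [← hψker]
        exact LinearMap.mem_ker.mpr hker
      obtain ⟨a, ha, b, hb, hab⟩ := Submodule.mem_sup.mp hmem
      refine Submodule.mem_map.mpr ⟨((x - a : ↥C) : I → F), (x - a).2, ?_⟩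
      have hz2 : x - a = y' + b := by
        have h5 : x = a + b + y' := by rw [hab]; abel
        rw [h5]
        abel
      funext i
      rcases i with j | j
      · show ((x - a : ↥C) : I → F) ((Equiv.Set.sumCompl J) (Sum.inl j)) = (x : I → F) j.1
        rw [Equiv.Set.sumCompl_apply_inl]
        have ha0 : (a : I → F) j.1 = 0 := congrFun (LinearMap.mem_ker.mp ha) j
        show (x : I → F) j.1 - (a : I → F) j.1 = (x : I → F) j.1
        rw [ha0, sub_zero]
      · show ((x - a : ↥C) : I → F) ((Equiv.Set.sumCompl J) (Sum.inr j)) = (y' : I → F) j.1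
        rw [Equiv.Set.sumCompl_apply_inr, hz2]
        have hb0 : (b : I → F) j.1 = 0 := congrFun (LinearMap.mem_ker.mp hb) j
        show (y' : I → F) j.1 + (b : I → F) j.1 = (y' : I → F) j.1
        rw [hb0, add_zero]
    · intro hw
      obtain ⟨z, hzC, rfl⟩ := Submodule.mem_map.mp hw
      refine Submodule.mem_map.mpr
        ⟨starMap F ↥J (Fin ((Fintype.card F ^ r - 1) / (Fintype.card F - 1))) ↥Jᶜ
          (h₁ ⟨z, hzC⟩, h₂ ⟨z, hzC⟩), ⟨?_, ?_⟩, ?_⟩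
      · exact Submodule.mem_map.mpr ⟨(h₁ ⟨z, hzC⟩, h₂ ⟨z, hzC⟩),
          ⟨⟨⟨z, hzC⟩, rfl⟩, ⟨⟨z, hzC⟩, rfl⟩⟩, rfl⟩
      · rintro v ⟨k, rfl⟩
        show σ (ψ ⟨z, hzC⟩) k - σ (ψ ⟨z, hzC⟩) k = 0
        exact sub_self _
      · funext i
        rcases i with j | j
        · show z j.1 = z ((Equiv.Set.sumCompl J) (Sum.inl j))
          rw [Equiv.Set.sumCompl_apply_inl]
        · show z j.1 = z ((Equiv.Set.sumCompl J) (Sum.inr j))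
          rw [Equiv.Set.sumCompl_apply_inr]
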